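/- Under the hypotheses ‖γ‖ ≥ b|γ| and |w_γ| ≤ exp(−((3 + log Δ)/b + 3)‖γ‖) for all polymers γ in a graph of maximum degree Δ, for every vertex v the sum ∑_{γ ≁ γ_v} |w_γ| e^{|γ| + 3‖γ‖} is strictly less than 1, where γ_v denotes the single-vertex polymer at v and γ ≁ γ_v means v ∈ V(γ). -/

import Mathlib

/-!
Each term is at most `(e²Δ)^{-|γ|}`, so it suffices to count the connected vertex sets `S ∋ v`
with `|S| = k`. Enumerate such an `S` as `v = u₀, u₁, …` by always adding the least vertex of `S`
adjacent to those already listed (Prim's order), and record, for each `s ≥ 1`, the index `j` of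
the first earlier neighbour of `u_s` together with the position of `u_s` among the neighbours of
`u_j`. These `k - 1` pairs lie in `[k] × [Δ]`, and they determine the frontier at every step,
hence the whole enumeration and `S`. So there are at most `C(kΔ, k-1) ≤ (eΔ)^k` such sets, and
the sum is at most `∑_{k ≥ 1} e^{-k} < 1`.
-/

open Finset Real

theorem Nat.choose_mul_le_exp_mul_pow (k Δ : ℕ) :
    (((k * Δ).choose (k - 1) : ℕ) : ℝ) ≤ exp k * (Δ : ℝ) ^ (k - 1) := by
  rcases k with _ | m
  · simp
  calc (((m + 1) * Δ).choose m : ℝ) ≤ (((m + 1) * Δ : ℕ) : ℝ) ^ m / m.factorial :=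
        Nat.choose_le_pow_div m _
    _ = ((m + 1 : ℝ) ^ m / m.factorial) * (Δ : ℝ) ^ m := by
        rw [Nat.cast_mul, mul_pow]; push_cast; ring
    _ ≤ exp (m + 1 : ℕ) * (Δ : ℝ) ^ m := by
        gcongr
        exact_mod_cast pow_div_factorial_le_exp (x := m + 1) (by positivity) m

theorem mul_exp_add_three_mul_le {b L s n x : ℝ} (hb : 0 < b) (hL : 0 ≤ L) (hs : b * n ≤ s)
    (hx : x ≤ exp (-((3 + L) / b + 3) * s)) : x * exp (n + 3 * s) ≤ exp (-(2 + L) * n) := by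
  have hscaled : (3 + L) * n ≤ (3 + L) / b * s :=
    calc (3 + L) * n = (3 + L) / b * (b * n) := by field_simp
      _ ≤ (3 + L) / b * s := by gcongr
  calc x * exp (n + 3 * s) ≤ exp (-((3 + L) / b + 3) * s) * exp (n + 3 * s) := by gcongr
    _ = exp (n - (3 + L) / b * s) := by rw [← exp_add]; ring_nf
    _ ≤ exp (-(2 + L) * n) := exp_le_exp.2 (by linarith)

theorem Finset.strictMonoOn_card_filter_lt {α : Type*} [LinearOrder α] (s : Finset α) :
    StrictMonoOn (fun y => #{z ∈ s | z < y}) s := by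
  intro y hy y' _ hlt
  refine card_lt_card ((ssubset_iff_of_subset ?_).2 ⟨y, ?_, ?_⟩)
  · exact monotone_filter_right s fun _ _ hz => hz.trans hlt
  · simpa [hlt] using hy
  · simp

namespace SimpleGraph

variable {V : Type*} (G : SimpleGraph V)

section Frontier

variable [DecidableEq V] [DecidableRel G.Adj]

def frontierIn (S A : Finset V) : Finset V := {x ∈ S \ A | ∃ y ∈ A, G.Adj y x}

variable {G} in
theorem frontierIn_nonempty {S A : Finset V} (hS : (G.induce (S : Set V)).Connected)
    (hAS : A ⊆ S) (hA : A.Nonempty) (hne : A ≠ S) : (G.frontierIn S A).Nonempty := by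
  obtain ⟨a, ha⟩ := hA
  obtain ⟨b, hbS, hbA⟩ := not_subset.1 fun h => hne (hAS.antisymm h)
  obtain ⟨p⟩ := hS.preconnected ⟨a, hAS ha⟩ ⟨b, hbS⟩
  obtain ⟨d, -, hd₁, hd₂⟩ := p.exists_boundary_dart {x | ↑x ∈ A} (by exact ha) (by exact hbA)
  exact ⟨d.snd, mem_filter.2 ⟨mem_sdiff.2 ⟨d.snd.2, hd₂⟩, d.fst, hd₁, d.adj⟩⟩

end Frontier

section Prim

variable [LinearOrder V]

section NeighborIndex

variable [G.LocallyFinite]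

def nbrIndex (x y : V) : ℕ := #{z ∈ G.neighborFinset x | z < y}

variable {G}

theorem nbrIndex_lt_degree {x y : V} (h : G.Adj x y) : G.nbrIndex x y < G.degree x := by
  rw [← card_neighborFinset_eq_degree]
  exact card_lt_card (filter_ssubset.2 ⟨y, (mem_neighborFinset _ _ _).2 h, lt_irrefl y⟩)

theorem injOn_nbrIndex (x : V) : Set.InjOn (G.nbrIndex x) (G.neighborSet x) := by
  rw [← coe_neighborFinset]
  exact (strictMonoOn_card_filter_lt _).injOn

end NeighborIndex

variable [DecidableRel G.Adj] (S : Finset V) (v : V)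

/- The default `v` lies in every `primSet`, so once the frontier is empty `primSet` stops
growing. -/
def primNext (A : Finset V) : V :=
  if h : (G.frontierIn S A).Nonempty then (G.frontierIn S A).min' h else v

def primSet : ℕ → Finset V
  | 0 => {v}
  | i + 1 => insert (G.primNext S v (primSet i)) (primSet i)

def primSeq : ℕ → V
  | 0 => v
  | i + 1 => G.primNext S v (G.primSet S v i)

variable {G S v}

theorem primNext_mem_frontierIn {A : Finset V} (h : (G.frontierIn S A).Nonempty) :
    G.primNext S v A ∈ G.frontierIn S A := by
  rw [primNext, dif_pos h]
  exact min'_mem _ h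

theorem primNext_mem (hv : v ∈ S) (A : Finset V) : G.primNext S v A ∈ S := by
  unfold primNext
  split_ifs with h
  · exact (mem_sdiff.1 (mem_filter.1 (min'_mem _ h)).1).1
  · exact hv

theorem primNext_congr {T A B : Finset V} (h : G.frontierIn S A = G.frontierIn T B) :
    G.primNext S v A = G.primNext T v B := by
  simp only [primNext, h]

theorem primSet_eq_image (i : ℕ) :
    G.primSet S v i = (range (i + 1)).image (G.primSeq S v) := by
  induction i with
  | zero => rfl
  | succ i ih => rw [range_add_one, image_insert, ← ih]; rfl

theorem mem_primSet_iff {i : ℕ} {x : V} :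
    x ∈ G.primSet S v i ↔ ∃ j ≤ i, G.primSeq S v j = x := by
  simp [primSet_eq_image]

theorem primSeq_mem_primSet {i j : ℕ} (h : j ≤ i) : G.primSeq S v j ∈ G.primSet S v i :=
  mem_primSet_iff.2 ⟨j, h, rfl⟩

theorem primSeq_mem (hv : v ∈ S) : ∀ i, G.primSeq S v i ∈ S
  | 0 => hv
  | _ + 1 => primNext_mem hv _

theorem primSet_subset (hv : v ∈ S) (i : ℕ) : G.primSet S v i ⊆ S := by
  rw [primSet_eq_image, image_subset_iff]
  exact fun j _ => primSeq_mem hv j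

theorem frontierIn_primSet_nonempty (hS : (G.induce (S : Set V)).Connected) (hv : v ∈ S)
    {i : ℕ} (hi : #(G.primSet S v i) < #S) : (G.frontierIn S (G.primSet S v i)).Nonempty :=
  frontierIn_nonempty hS (primSet_subset hv i) ⟨v, primSeq_mem_primSet (Nat.zero_le i)⟩
    (by rintro h; rw [h] at hi; exact lt_irrefl _ hi)

theorem card_primSet (hS : (G.induce (S : Set V)).Connected) (hv : v ∈ S) {i : ℕ}
    (hi : i < #S) : #(G.primSet S v i) = i + 1 := by
  induction i with
  | zero => rfl
  | succ i ih =>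
    have hcard := ih (by omega)
    have hnew := primNext_mem_frontierIn (v := v)
      (frontierIn_primSet_nonempty hS hv (i := i) (by omega))
    rw [primSet, card_insert_of_notMem (mem_sdiff.1 (mem_filter.1 hnew).1).2, hcard]

theorem primSet_card_sub_one (hS : (G.induce (S : Set V)).Connected) (hv : v ∈ S) :
    G.primSet S v (#S - 1) = S := by
  have hpos := card_pos.2 ⟨v, hv⟩
  exact eq_of_subset_of_card_le (primSet_subset hv _) (by rw [card_primSet hS hv] <;> omega)

theorem injOn_primSeq (hS : (G.induce (S : Set V)).Connected) (hv : v ∈ S) :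
    Set.InjOn (G.primSeq S v) (range #S) := by
  have hpos := card_pos.2 ⟨v, hv⟩
  rw [← card_image_iff, ← Nat.sub_add_cancel hpos, ← primSet_eq_image,
    card_primSet hS hv (by omega)]
  simp

theorem exists_adj_primSeq (hS : (G.induce (S : Set V)).Connected) (hv : v ∈ S) {s : ℕ}
    (hs : s ∈ Ico 1 #S) : ∃ j < s, G.Adj (G.primSeq S v j) (G.primSeq S v s) := by
  obtain ⟨hs₁, hs₂⟩ := mem_Ico.1 hs
  obtain ⟨t, rfl⟩ : ∃ t, s = t + 1 := ⟨s - 1, by omega⟩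
  have hne := frontierIn_primSet_nonempty hS hv (i := t) (by rw [card_primSet hS hv] <;> omega)
  obtain ⟨-, y, hy, hadj⟩ := mem_filter.1 (primNext_mem_frontierIn (v := v) hne)
  obtain ⟨j, hj, rfl⟩ := mem_primSet_iff.1 hy
  exact ⟨j, by omega, hadj⟩

variable (G S v)

def primParent (s : ℕ) : ℕ :=
  if h : ∃ j < s, G.Adj (G.primSeq S v j) (G.primSeq S v s) then Nat.find h else 0

variable {G S v}

theorem primParent_spec {s : ℕ} (h : ∃ j < s, G.Adj (G.primSeq S v j) (G.primSeq S v s)) :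
    G.primParent S v s < s ∧ G.Adj (G.primSeq S v (G.primParent S v s)) (G.primSeq S v s) := by
  rw [primParent, dif_pos h]
  exact Nat.find_spec h

theorem primParent_le {s j : ℕ} (hj : j < s) (h : G.Adj (G.primSeq S v j) (G.primSeq S v s)) :
    G.primParent S v s ≤ j := by
  rw [primParent, dif_pos ⟨j, hj, h⟩]
  exact Nat.find_min' _ ⟨hj, h⟩

section Code

variable [G.LocallyFinite]

variable (G S v) in
def primCode : Finset (ℕ × ℕ) :=
  (Ico 1 #S).image fun s =>
    (G.primParent S v s, G.nbrIndex (G.primSeq S v (G.primParent S v s)) (G.primSeq S v s))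

theorem primCode_subset {Δ : ℕ} (hdeg : ∀ x, G.degree x ≤ Δ)
    (hS : (G.induce (S : Set V)).Connected) (hv : v ∈ S) :
    G.primCode S v ⊆ range #S ×ˢ range Δ := by
  intro p hp
  obtain ⟨s, hs, rfl⟩ := mem_image.1 hp
  obtain ⟨hlt, hadj⟩ := primParent_spec (exists_adj_primSeq hS hv hs)
  simp only [mem_product, mem_range]
  exact ⟨hlt.trans (mem_Ico.1 hs).2, (nbrIndex_lt_degree hadj).trans_le (hdeg _)⟩

theorem card_primCode (hS : (G.induce (S : Set V)).Connected) (hv : v ∈ S) :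
    #(G.primCode S v) = #S - 1 := by
  rw [primCode, card_image_of_injOn, Nat.card_Ico]
  intro s hs t ht hst
  obtain ⟨-, hadj_s⟩ := primParent_spec (exists_adj_primSeq hS hv hs)
  obtain ⟨-, hadj_t⟩ := primParent_spec (exists_adj_primSeq hS hv ht)
  obtain ⟨hp, hi⟩ := Prod.mk.inj hst
  rw [hp] at hadj_s hi
  exact injOn_primSeq hS hv (mem_range.2 (mem_Ico.1 hs).2) (mem_range.2 (mem_Ico.1 ht).2)
    (injOn_nbrIndex _ hadj_s hadj_t hi)

theorem mem_frontierIn_primSet_iff (hS : (G.induce (S : Set V)).Connected) (hv : v ∈ S)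
    {i : ℕ} {x : V} :
    x ∈ G.frontierIn S (G.primSet S v i) ↔ x ∉ G.primSet S v i ∧
      ∃ j ≤ i, G.Adj (G.primSeq S v j) x ∧
        (j, G.nbrIndex (G.primSeq S v j) x) ∈ G.primCode S v := by
  have hpos := card_pos.2 ⟨v, hv⟩
  simp only [frontierIn, mem_filter, mem_sdiff]
  constructor
  · rintro ⟨⟨hxS, hx⟩, y, hy, hadj⟩
    obtain ⟨s, hs, rfl⟩ := mem_primSet_iff.1 ((primSet_card_sub_one hS hv).symm ▸ hxS)
    obtain ⟨j, hj, rfl⟩ := mem_primSet_iff.1 hy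
    have hjs : j < s := lt_of_not_ge fun h => hx (primSeq_mem_primSet (h.trans hj))
    have hs' : s ∈ Ico 1 #S := mem_Ico.2 ⟨by omega, by omega⟩
    exact ⟨hx, G.primParent S v s, (primParent_le hjs hadj).trans hj,
      (primParent_spec ⟨j, hjs, hadj⟩).2, mem_image_of_mem _ hs'⟩
  · rintro ⟨hx, j, hj, hadj, hcode⟩
    obtain ⟨s, hs, hst⟩ := mem_image.1 hcode
    obtain ⟨hp, hi⟩ := Prod.mk.inj hst
    obtain ⟨-, hadj_s⟩ := primParent_spec (exists_adj_primSeq hS hv hs)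
    rw [hp] at hadj_s hi
    obtain rfl := injOn_nbrIndex _ hadj_s hadj hi
    exact ⟨⟨primSeq_mem hv s, hx⟩, _, primSeq_mem_primSet hj, hadj⟩

theorem primSeq_eq_of_primCode_eq {T : Finset V} (hS : (G.induce (S : Set V)).Connected)
    (hT : (G.induce (T : Set V)).Connected) (hvS : v ∈ S) (hvT : v ∈ T)
    (h : G.primCode S v = G.primCode T v) (i : ℕ) : G.primSeq S v i = G.primSeq T v i := by
  induction i using Nat.strong_induction_on with
  | _ i ih =>
    cases i with
    | zero => rfl
    | succ i =>
      have hset : G.primSet S v i = G.primSet T v i := by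
        simp only [primSet_eq_image]
        exact image_congr fun j hj => ih j (mem_range.1 hj)
      refine primNext_congr (ext fun x => ?_)
      rw [mem_frontierIn_primSet_iff hS hvS, mem_frontierIn_primSet_iff hT hvT, hset, h]
      refine and_congr_right fun _ => exists_congr fun j => and_congr_right fun hj => ?_
      rw [ih j (by omega)]

theorem eq_of_primCode_eq {T : Finset V} (hS : (G.induce (S : Set V)).Connected)
    (hT : (G.induce (T : Set V)).Connected) (hvS : v ∈ S) (hvT : v ∈ T) (hST : #S = #T)
    (h : G.primCode S v = G.primCode T v) : S = T := by
  rw [← primSet_card_sub_one hS hvS, ← primSet_card_sub_one hT hvT, primSet_eq_image,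
    primSet_eq_image, hST, funext (primSeq_eq_of_primCode_eq hS hT hvS hvT h)]

end Code

end Prim

section Counting

variable [Fintype V] [DecidableRel G.Adj]

open Classical in
theorem card_connected_finsets_le_choose {Δ : ℕ}
    (hdeg : ∀ x, G.degree x ≤ Δ) (v : V) (k : ℕ) :
    #{S : Finset V | v ∈ S ∧ (G.induce (S : Set V)).Connected ∧ #S = k} ≤
      (k * Δ).choose (k - 1) := by
  let : LinearOrder V := LinearOrder.lift' _ (Fintype.equivFin V).injective
  calc _ ≤ #((range k ×ˢ range Δ).powersetCard (k - 1)) := by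
        refine card_le_card_of_injOn (G.primCode · v) ?_ ?_
        · intro S hS
          simp only [coe_filter, Set.mem_ofPred_eq, mem_univ, true_and] at hS
          obtain ⟨hv, hc, rfl⟩ := hS
          exact mem_powersetCard.2 ⟨primCode_subset hdeg hc hv, card_primCode hc hv⟩
        · intro S hS T hT h
          simp only [coe_filter, Set.mem_ofPred_eq, mem_univ, true_and] at hS hT
          obtain ⟨hvS, hcS, hkS⟩ := hS
          obtain ⟨hvT, hcT, hkT⟩ := hT
          exact eq_of_primCode_eq hcS hcT hvS hvT (hkS.trans hkT.symm) h
    _ = (k * Δ).choose (k - 1) := by simp [card_powersetCard]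


open Classical in
theorem card_connected_finsets_le_exp_mul_pow {Δ : ℕ} (hΔ : 1 ≤ Δ)
    (hdeg : ∀ x, G.degree x ≤ Δ) (v : V) (k : ℕ) :
    (#{S : Finset V | v ∈ S ∧ (G.induce (S : Set V)).Connected ∧ #S = k} : ℝ) ≤
      (exp 1 * Δ) ^ k :=
  calc _ ≤ (((k * Δ).choose (k - 1) : ℕ) : ℝ) := by
        exact_mod_cast G.card_connected_finsets_le_choose hdeg v k
    _ ≤ exp k * (Δ : ℝ) ^ (k - 1) := Nat.choose_mul_le_exp_mul_pow k Δ
    _ ≤ exp k * (Δ : ℝ) ^ k := by gcongr; exacts [by exact_mod_cast hΔ, Nat.sub_le k 1]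
    _ = (exp 1 * Δ) ^ k := by rw [mul_pow, exp_one_pow]

open Classical in
theorem sum_connected_finsets_exp_lt_one {Δ : ℕ} (hΔ : 1 ≤ Δ) (hdeg : ∀ x, G.degree x ≤ Δ)
    (v : V) :
    ∑ S ∈ {S : Finset V | v ∈ S ∧ (G.induce (S : Set V)).Connected},
      exp (-(2 + log Δ) * #S) < 1 := by
  set P : Finset (Finset V) := {S | v ∈ S ∧ (G.induce (S : Set V)).Connected}
  have hmaps : ∀ S ∈ P, #S ∈ Ico 1 (Fintype.card V + 1) := by
    intro S hS
    simp only [P, mem_filter] at hS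
    exact mem_Ico.2 ⟨card_pos.2 ⟨v, hS.2.1⟩, Nat.lt_succ_of_le (card_le_univ S)⟩
  have hfiber (k : ℕ) : (#{S ∈ P | #S = k} : ℝ) * exp (-(2 + log Δ) * k) ≤ exp (-1) ^ k := by
    have hΔ₀ : (0 : ℝ) < Δ := by exact_mod_cast hΔ
    have hratio : exp 1 * Δ * exp (-(2 + log Δ)) = exp (-1) :=
      calc _ = exp (1 + log Δ + -(2 + log Δ)) := by rw [exp_add, exp_add, exp_log hΔ₀]
        _ = exp (-1) := by ring_nf
    rw [filter_filter]
    simp only [and_assoc]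
    calc _ ≤ (exp 1 * Δ) ^ k * exp (-(2 + log Δ)) ^ k := by
          rw [mul_comm _ (k : ℝ), exp_nat_mul]
          gcongr
          exact G.card_connected_finsets_le_exp_mul_pow hΔ hdeg v k
      _ = exp (-1) ^ k := by rw [← mul_pow, hratio]
  have hq : exp (-1) < 1 / 2 := by
    rw [exp_neg, one_div]
    exact inv_strictAnti₀ two_pos exp_one_gt_two
  calc _ = ∑ k ∈ Ico 1 (Fintype.card V + 1), ∑ S ∈ P with #S = k, exp (-(2 + log Δ) * k) :=
        (sum_fiberwise_of_maps_to' hmaps fun k : ℕ => exp (-(2 + log Δ) * k)).symm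
    _ ≤ ∑ k ∈ Ico 1 (Fintype.card V + 1), exp (-1) ^ k :=
        sum_le_sum fun k _ => by rw [sum_const, nsmul_eq_mul]; exact hfiber k
    _ ≤ exp (-1) ^ 1 / (1 - exp (-1)) :=
        geom_sum_Ico_le_of_lt_one (exp_pos _).le (by linarith)
    _ < 1 := by rw [pow_one, div_lt_one (by linarith)]; linarith

end Counting

end SimpleGraph

attribute [local instance] Classical.propDecidable

theorem kotecky_preiss_single_vertex_sum {V : Type*} [Fintype V] [DecidableEq V]
    (G : SimpleGraph V) [DecidableRel G.Adj] (Δ : ℕ) (hΔ : 2 ≤ Δ)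
    (hdeg : ∀ v, G.degree v ≤ Δ) (b : ℝ) (hb : 0 < b)
    (size : {s : Finset V // s.Nonempty ∧ (SimpleGraph.induce (↑↑s : Set V) G).Connected} → ℝ)
    (w : {s : Finset V // s.Nonempty ∧ (SimpleGraph.induce (↑↑s : Set V) G).Connected} → ℂ)
    (hsz : ∀ γ, b * γ.val.card ≤ size γ)
    (hw : ∀ γ, ‖w γ‖ ≤ Real.exp (-(((3 + Real.log Δ) / b) + 3) * size γ))
    (v : V) :
    ∑ γ ∈ Finset.univ.filter (fun γ :
        {s : Finset V // s.Nonempty ∧ (SimpleGraph.induce (↑↑s : Set V) G).Connected} =>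
        v ∈ γ.val),
      ‖w γ‖ * Real.exp (γ.val.card + 3 * size γ) < 1 := by
  calc _ ≤ ∑ γ ∈ _, exp (-(2 + log Δ) * #γ.val) :=
        sum_le_sum fun γ _ => mul_exp_add_three_mul_le hb (log_natCast_nonneg Δ) (hsz γ) (hw γ)
    _ ≤ ∑ S ∈ {S : Finset V | v ∈ S ∧ (G.induce (S : Set V)).Connected},
          exp (-(2 + log Δ) * #S) := by
        refine (sum_map _ (Function.Embedding.subtype _)
          fun S => exp (-(2 + log Δ) * #S)).symm.trans_le
            (sum_le_sum_of_subset_of_nonneg (fun S hS => ?_) fun _ _ _ => (exp_pos _).le)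
        obtain ⟨γ, hγ, rfl⟩ := mem_map.1 hS
        exact mem_filter.2 ⟨mem_univ _, (mem_filter.1 hγ).2, γ.2.2⟩
    _ < 1 := by convert G.sum_connected_finsets_exp_lt_one (by omega) hdeg v
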